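/- For any n×n complex matrix B, (n² − n)·det(B) = Σ_{1≤i,j≤n} det(B_{ij}), where B_{ij} is the matrix obtained from B by replacing the (i,j) entry with 0. -/

import Mathlib

open Finset Matrix Polynomial BigOperators

variable {α : Type*} [Fintype α] [DecidableEq α]

/-- The sign of `σ` restricted to an invariant subset `S`, or `0` if `S` is not invariant. -/
def restSign (σ : Equiv.Perm α) (S : Finset α) : ℤ :=
  if h : ∀ x, x ∈ S ↔ σ x ∈ S then Equiv.Perm.sign (σ.subtypePerm (p := (· ∈ S)) fun x => (h x).symm) else 0

/-- The trace of `σ` acting on the `r`-th exterior power of the permutation representation. -/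
def extTrace (r : ℕ) (σ : Equiv.Perm α) : ℤ :=
  ∑ S ∈ Finset.univ.powersetCard r, restSign σ S

/-- `hookChar k σ` is the value `χ_{(k,1^{n-k})}(σ)` of the irreducible character of the
symmetric group on `α` (with `n = |α|`) indexed by the hook partition `(k,1^{n-k})`;
it is `0` when the partition is invalid, i.e. unless `1 ≤ k ≤ n`. -/
def hookChar (k : ℕ) (σ : Equiv.Perm α) : ℤ :=
  if 1 ≤ k ∧ k ≤ Fintype.card α then
    ∑ r ∈ Finset.range (Fintype.card α - k + 1),
      (-1) ^ (Fintype.card α - k - r) * extTrace r σ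
  else 0

/-- The hook immanant `d_{(k,1^{n-k})}(B)` of a square matrix `B`. -/
def dImm {R : Type*} [CommRing R] (k : ℕ) (B : Matrix α α R) : R :=
  ∑ σ : Equiv.Perm α, (hookChar k σ : R) * ∏ i, B i (σ i)

/-- The permanent of a square matrix. -/
def perM {R : Type*} [CommRing R] (B : Matrix α α R) : R :=
  ∑ σ : Equiv.Perm α, ∏ i, B i (σ i)

/-- The principal submatrix of `B` with rows and columns indexed by `S`. -/
def subMat {R : Type*} (B : Matrix α α R) (S : Finset α) : Matrix S S R :=
  fun i j => B i j

/-- `B` with the `(i,j)` entry replaced by `0`. -/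
def zeroEntry {R : Type*} [Zero R] (B : Matrix α α R) (i j : α) : Matrix α α R :=
  fun s t => if s = i ∧ t = j then 0 else B s t

/-- `B_{(ij)}`: keeps the `(i,j)` entry and all entries outside row `i` and column `j`,
zeroing the remaining entries of row `i` and column `j`. -/
def parenM {R : Type*} [Zero R] (B : Matrix α α R) (i j : α) : Matrix α α R :=
  fun s t => if (s = i ∧ t = j) ∨ (s ≠ i ∧ t ≠ j) then B s t else 0

/-- `B_{[ij]}`: `B` with both the `(i,j)` and `(j,i)` entries set to `0`. -/
def brackM {R : Type*} [Zero R] (B : Matrix α α R) (i j : α) : Matrix α α R :=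
  fun s t => if (s = i ∧ t = j) ∨ (s = j ∧ t = i) then 0 else B s t

/-- The hook immanantal polynomial `Φ_k(B,x) = d_{(k,1^{n-k})}(x Iₙ - B)`. -/
noncomputable def hookPoly (k : ℕ) (B : Matrix α α ℂ) : Polynomial ℂ :=
  dImm k (charmatrix B)

/-- The permanental polynomial `per(x Iₙ - B)`. -/
noncomputable def perPoly (B : Matrix α α ℂ) : Polynomial ℂ :=
  perM (charmatrix B)


lemma det_sum_single_aux {n : ℕ} (B : Matrix (Fin n) (Fin n) ℂ) (i : Fin n) :
    ∑ j, B i j * ((B.updateRow i (Pi.single j 1 : Fin n → ℂ)).det) = B.det := by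
  have hrow : B i = ∑ j, B i j • (Pi.single j 1 : Fin n → ℂ) := by
    ext t; simp [Pi.single_apply, eq_comm]
  have h : B.det = (B.updateRow i (∑ j, B i j • (Pi.single j 1 : Fin n → ℂ))).det := by
    rw [← hrow, updateRow_eq_self]
  have hm : (B.updateRow i (∑ j, B i j • (Pi.single j 1 : Fin n → ℂ))).det
      = ∑ j, (B.updateRow i (B i j • (Pi.single j 1 : Fin n → ℂ))).det :=
    ((detRowAlternating : (Fin n → ℂ) [⋀^Fin n]→ₗ[ℂ] ℂ).map_update_sum
      Finset.univ i (fun j => B i j • (Pi.single j 1 : Fin n → ℂ)) (m := B))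
  rw [h, hm]
  simp [det_updateRow_smul]

lemma det_zeroEntry_aux {n : ℕ} (B : Matrix (Fin n) (Fin n) ℂ) (i j : Fin n) :
    (zeroEntry B i j).det = B.det - B i j * (B.updateRow i (Pi.single j 1 : Fin n → ℂ)).det := by
  have h : zeroEntry B i j
      = B.updateRow i (B i + (-(B i j)) • (Pi.single j 1 : Fin n → ℂ)) := by
    ext s t
    by_cases hs : s = i
    · subst hs
      by_cases ht : t = j <;> simp [zeroEntry, updateRow_apply, ht, Pi.single_apply]
    · simp [zeroEntry, updateRow_apply, hs]
  rw [h, det_updateRow_add, det_updateRow_smul, updateRow_eq_self]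
  ring

/-- `(n² − n)·det(B) = Σ_{1≤i,j≤n} det(B_{ij})`. -/
theorem det_sum_zeroEntry (n : ℕ) (B : Matrix (Fin n) (Fin n) ℂ) :
    ((n : ℂ) ^ 2 - n) * B.det = ∑ p : Fin n × Fin n, (zeroEntry B p.1 p.2).det := by
  rw [Fintype.sum_prod_type]
  simp only [det_zeroEntry_aux, Finset.sum_sub_distrib, Finset.sum_const, Finset.card_univ,
    Fintype.card_fin, nsmul_eq_mul, det_sum_single_aux]
  ring
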